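/- Let k ∈ (0,2π) with k ≠ π, and define g_k(x,y) := 2 + (x−2)cos k − sin k·√(x(4−x))·(2y−1) for x ∈ [0,4], y ∈ {0,1}. Define the set E₂(k) := { E ∈ ℝ : there exist x₁, x₂ ∈ [0,4] and y₁, y₂ ∈ {0,1} with E = x₁ + x₂ = g_k(x₁,y₁) + g_k(x₂,y₂) }. Then for k ∈ (0,π), E₂(k) = [4 − 4cos(k/2), 4 + 4cos(k/2)], and for k ∈ (π,2π), E₂(k) = [4 + 4cos(k/2), 4 − 4cos(k/2)]. -/
import Mathlib

noncomputable section

/-- g_k(x,y) := 2 + (x−2)cos k − sin k·√(x(4−x))·(2y−1). -/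
def gWvN (k x y : ℝ) : ℝ :=
  2 + (x - 2) * Real.cos k - Real.sin k * Real.sqrt (x * (4 - x)) * (2 * y - 1)

/-- The exceptional energy set E₂(k) for the two-dimensional separation argument. -/
def E2set (k : ℝ) : Set ℝ :=
  { E : ℝ | ∃ x₁ ∈ Set.Icc (0 : ℝ) 4, ∃ x₂ ∈ Set.Icc (0 : ℝ) 4,
      ∃ y₁ ∈ ({0, 1} : Set ℝ), ∃ y₂ ∈ ({0, 1} : Set ℝ),
        E = x₁ + x₂ ∧ E = gWvN k x₁ y₁ + gWvN k x₂ y₂ }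

lemma gWvN_param (k β : ℝ) :
    gWvN k (2 + 2 * Real.cos β) (if 0 ≤ Real.sin β then (1:ℝ) else 0)
      = 2 + 2 * Real.cos (β + k) := by
  have hpyth := Real.sin_sq_add_cos_sq β
  have hx : (2 + 2 * Real.cos β) * (4 - (2 + 2 * Real.cos β)) = (2 * Real.sin β) ^ 2 := by
    nlinarith [hpyth]
  unfold gWvN
  rw [hx, Real.sqrt_sq_eq_abs, Real.cos_add]
  split_ifs with h
  · rw [abs_of_nonneg (by linarith : (0:ℝ) ≤ 2 * Real.sin β)]; ring
  · push_neg at h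
    rw [abs_of_neg (by linarith : 2 * Real.sin β < 0)]; ring

set_option maxHeartbeats 1000000 in
lemma E2set_eq_abs (k : ℝ) (hk0 : 0 < k) (hk2 : k < 2 * Real.pi)
    (hc : Real.cos (k / 2) ≠ 0) :
    E2set k = Set.Icc (4 - 4 * |Real.cos (k / 2)|) (4 + 4 * |Real.cos (k / 2)|) := by
  have hpi := Real.pi_pos
  obtain ⟨c, hcdef⟩ : ∃ c, Real.cos (k / 2) = c := ⟨_, rfl⟩
  obtain ⟨s, hsdef⟩ : ∃ s, Real.sin (k / 2) = s := ⟨_, rfl⟩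
  rw [hcdef] at hc ⊢
  have hs : 0 < s := by
    rw [← hsdef]
    exact Real.sin_pos_of_pos_of_lt_pi (by linarith) (by linarith)
  have hcs : s ^ 2 + c ^ 2 = 1 := by
    rw [← hcdef, ← hsdef]; exact Real.sin_sq_add_cos_sq _
  have hkk : k = 2 * (k / 2) := by ring
  have hcosk : Real.cos k = 2 * c ^ 2 - 1 := by
    rw [hkk, Real.cos_two_mul, hcdef]
  have hsink : Real.sin k = 2 * s * c := by
    rw [hkk, Real.sin_two_mul, hcdef, hsdef]
  ext E
  constructor
  · rintro ⟨x₁, hx₁, x₂, hx₂, y₁, hy₁, y₂, hy₂, hE1, hE2⟩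
    obtain ⟨R₁, hR₁0, hR₁sq, hR₁def⟩ :
        ∃ R, 0 ≤ R ∧ R ^ 2 = x₁ * (4 - x₁) ∧ Real.sqrt (x₁ * (4 - x₁)) = R :=
      ⟨_, Real.sqrt_nonneg _, Real.sq_sqrt (by nlinarith [hx₁.1, hx₁.2]), rfl⟩
    obtain ⟨R₂, hR₂0, hR₂sq, hR₂def⟩ :
        ∃ R, 0 ≤ R ∧ R ^ 2 = x₂ * (4 - x₂) ∧ Real.sqrt (x₂ * (4 - x₂)) = R :=
      ⟨_, Real.sqrt_nonneg _, Real.sq_sqrt (by nlinarith [hx₂.1, hx₂.2]), rfl⟩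
    simp only [Set.mem_insert_iff, Set.mem_singleton_iff] at hy₁ hy₂
    obtain ⟨e₁, he₁, hre₁⟩ : ∃ e : ℝ, (e = 1 ∨ e = -1) ∧ 2 * y₁ - 1 = e := by
      rcases hy₁ with h | h <;> exact ⟨_, by rw [h]; norm_num, rfl⟩
    obtain ⟨e₂, he₂, hre₂⟩ : ∃ e : ℝ, (e = 1 ∨ e = -1) ∧ 2 * y₂ - 1 = e := by
      rcases hy₂ with h | h <;> exact ⟨_, by rw [h]; norm_num, rfl⟩
    unfold gWvN at hE2
    rw [hcosk, hsink, hR₁def, hR₂def, hre₁, hre₂] at hE2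
    have key : (x₁ + x₂ - 4) * s = -(c * (e₁ * R₁ + e₂ * R₂)) := by
      have h2 : (2 * s) * ((x₁ + x₂ - 4) * s) = (2 * s) * (-(c * (e₁ * R₁ + e₂ * R₂))) := by
        linear_combination hE2 - hE1 + (x₁ + x₂ - 4) * 2 * hcs
      exact mul_left_cancel₀ (by positivity) h2
    clear hE2 hy₁ hy₂ hre₁ hre₂ hR₁def hR₂def hcosk hsink hkk hcdef hsdef hc
    have keysq : (x₁ + x₂ - 4) ^ 2 * s ^ 2 = c ^ 2 * (e₁ * R₁ + e₂ * R₂) ^ 2 := by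
      linear_combination ((x₁ + x₂ - 4) * s - c * (e₁ * R₁ + e₂ * R₂)) * key
    have hB : (e₁ * R₁ + e₂ * R₂) ^ 2 ≤ (R₁ + R₂) ^ 2 := by
      rcases he₁ with h | h <;> rcases he₂ with h' | h' <;> rw [h, h'] <;>
        nlinarith [mul_nonneg hR₁0 hR₂0]
    have cauchy : (x₁ + x₂ - 4) ^ 2 + (R₁ + R₂) ^ 2 ≤ 16 := by
      nlinarith [sq_nonneg ((x₁ - 2) * R₂ - (x₂ - 2) * R₁), mul_nonneg hR₁0 hR₂0,
        sq_nonneg ((x₁ - 2) * (x₂ - 2) + R₁ * R₂ + 4)]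
    have hsq : (x₁ + x₂ - 4) ^ 2 ≤ 16 * c ^ 2 := by
      nlinarith [keysq, hB, cauchy, sq_nonneg c, sq_nonneg (x₁ + x₂ - 4),
        mul_le_mul_of_nonneg_left cauchy (sq_nonneg c)]
    have habs : |c| ^ 2 = c ^ 2 := sq_abs c
    have habs0 : 0 ≤ |c| := abs_nonneg c
    constructor
    · rw [hE1]; nlinarith [hsq, habs, habs0]
    · rw [hE1]; nlinarith [hsq, habs, habs0]
  · intro hE
    have hcabs : 0 < |c| := abs_pos.mpr hc
    obtain ⟨t, htdef⟩ : ∃ t : ℝ, (E - 4) / 4 = t := ⟨_, rfl⟩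
    have htE : E = 4 + 4 * t := by rw [← htdef]; ring
    have ht : |t| ≤ |c| := by
      rw [abs_le]
      constructor
      · rw [← htdef]; have := hE.1; linarith
      · rw [← htdef]; have := hE.2; linarith
    obtain ⟨r, hrdef⟩ : ∃ r : ℝ, t / c = r := ⟨_, rfl⟩
    have hr : |r| ≤ 1 := by
      rw [← hrdef, abs_div, div_le_one hcabs]; exact ht
    have hr1 : -1 ≤ r := (abs_le.mp hr).1
    have hr2 : r ≤ 1 := (abs_le.mp hr).2
    have hcos1 : Real.cos (Real.arccos r) = r := Real.cos_arccos hr1 hr2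
    obtain ⟨β₁, hβ₁def⟩ : ∃ b : ℝ, Real.arccos r - k / 2 = b := ⟨_, rfl⟩
    obtain ⟨β₂, hβ₂def⟩ : ∃ b : ℝ, -(k / 2) - Real.arccos r = b := ⟨_, rfl⟩
    have hct : c * r = t := by
      rw [← hrdef]; field_simp
    have hsum : Real.cos β₁ + Real.cos β₂ = 2 * c * r := by
      rw [Real.cos_add_cos]
      have e1 : (β₁ + β₂) / 2 = -(k / 2) := by rw [← hβ₁def, ← hβ₂def]; ring
      have e2 : (β₁ - β₂) / 2 = Real.arccos r := by rw [← hβ₁def, ← hβ₂def]; ring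
      rw [e1, e2, Real.cos_neg, hcos1, hcdef]
    have hsum2 : Real.cos (β₁ + k) + Real.cos (β₂ + k) = 2 * c * r := by
      rw [Real.cos_add_cos]
      have e1 : (β₁ + k + (β₂ + k)) / 2 = k / 2 := by rw [← hβ₁def, ← hβ₂def]; ring
      have e2 : (β₁ + k - (β₂ + k)) / 2 = Real.arccos r := by rw [← hβ₁def, ← hβ₂def]; ring
      rw [e1, e2, hcos1, hcdef]
    refine ⟨2 + 2 * Real.cos β₁, ⟨?_, ?_⟩, 2 + 2 * Real.cos β₂, ⟨?_, ?_⟩,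
      (if 0 ≤ Real.sin β₁ then (1:ℝ) else 0), ?_,
      (if 0 ≤ Real.sin β₂ then (1:ℝ) else 0), ?_, ?_, ?_⟩
    · linarith [Real.neg_one_le_cos β₁]
    · linarith [Real.cos_le_one β₁]
    · linarith [Real.neg_one_le_cos β₂]
    · linarith [Real.cos_le_one β₂]
    · split_ifs <;> simp
    · split_ifs <;> simp
    · linarith [hsum, hct, htE]
    · rw [gWvN_param, gWvN_param]; linarith [hsum2, hct, htE]

/-- For k ∈ (0,π), E₂(k) = [4 − 4cos(k/2), 4 + 4cos(k/2)];
for k ∈ (π,2π), E₂(k) = [4 + 4cos(k/2), 4 − 4cos(k/2)]. -/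
theorem E2set_eq (k : ℝ) (hk0 : 0 < k) (hk2 : k < 2 * Real.pi) (hkpi : k ≠ Real.pi) :
    (k < Real.pi →
      E2set k = Set.Icc (4 - 4 * Real.cos (k / 2)) (4 + 4 * Real.cos (k / 2))) ∧
    (Real.pi < k →
      E2set k = Set.Icc (4 + 4 * Real.cos (k / 2)) (4 - 4 * Real.cos (k / 2))) := by
  have hpi := Real.pi_pos
  constructor
  · intro hklt
    have hcpos : 0 < Real.cos (k / 2) :=
      Real.cos_pos_of_mem_Ioo ⟨by linarith, by linarith⟩
    rw [E2set_eq_abs k hk0 hk2 (ne_of_gt hcpos), abs_of_pos hcpos]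
  · intro hkgt
    have hcneg : Real.cos (k / 2) < 0 :=
      Real.cos_neg_of_pi_div_two_lt_of_lt (by linarith) (by linarith)
    rw [E2set_eq_abs k hk0 hk2 (ne_of_lt hcneg), abs_of_neg hcneg]
    ring_nf
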